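/- For all integers k ≥ 2 and m ≥ 2, the sum over all strictly increasing sequences 1 = i_1 < i_2 < ... < i_k < m of the product ∏_{j=1}^{k-1} (i_{j+1} - i_j) equals the binomial coefficient C(m+k-3, 2k-2). -/

import Mathlib

/-!
Write `gapSum a j m` for the sum, over `j`-subsets `t` of the open interval `(a, m)`, of the
product of the consecutive gaps of `{a} ∪ t`. Splitting off the least element `i` of `t`
contributes the gap `i - a`, so `gapSum a (j + 1) m = ∑_{a < i < m} (i - a) * gapSum i j m`.
Since `gapSum a 0 m = 1`, induction on `j`, with the convolution
`∑_{q < n} (n - q) * C(q + j, 2j) = C(n + j + 1, 2j + 2)` (two hockey-stick summations),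
gives `gapSum a j m = C(m + j - a - 1, 2j)`; the theorem is the case `a = 1`, `j = k - 1`.
-/

open Finset

theorem sum_range_add_choose_of_le {j r : ℕ} (h : j ≤ r) (n : ℕ) :
    ∑ q ∈ range n, (q + j).choose r = (n + j).choose (r + 1) := by
  induction n with
  | zero => exact (Nat.choose_eq_zero_of_lt (by omega)).symm
  | succ n ih => rw [sum_range_succ, ih, Nat.add_right_comm, Nat.choose_succ_succ', add_comm]

theorem sum_range_sub_mul_add_choose_of_le {j r : ℕ} (h : j ≤ r) (n : ℕ) :
    ∑ q ∈ range n, (n - q) * (q + j).choose r = (n + j + 1).choose (r + 2) := by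
  induction n with
  | zero => exact (Nat.choose_eq_zero_of_lt (by omega)).symm
  | succ n ih =>
    calc ∑ q ∈ range (n + 1), (n + 1 - q) * (q + j).choose r
        = ∑ q ∈ range (n + 1), ((n - q) * (q + j).choose r + (q + j).choose r) :=
          sum_congr rfl fun q hq => by
            rw [Nat.sub_add_comm (Nat.lt_succ_iff.mp (mem_range.mp hq)), add_one_mul]
      _ = (n + j + 1).choose (r + 2) + (n + 1 + j).choose (r + 1) := by
          rw [sum_add_distrib, sum_range_succ, Nat.sub_self, zero_mul, add_zero, ih,
            sum_range_add_choose_of_le h]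
      _ = (n + 1 + j + 1).choose (r + 2) := by
          rw [Nat.add_right_comm n 1 j, Nat.choose_succ_succ' (n + j + 1) (r + 1), add_comm]

theorem sum_Ico_sub_mul_choose (a m j : ℕ) :
    ∑ i ∈ Ico (a + 1) m, (i - a) * (m + j - i - 1).choose (2 * j) =
      (m + j - a).choose (2 * j + 2) := by
  rcases le_or_gt m a with hma | hma
  · rw [Ico_eq_empty_of_le (by omega), sum_empty, Nat.choose_eq_zero_of_lt (by omega)]
  obtain ⟨n, rfl⟩ : ∃ n, m = a + 1 + n := ⟨m - (a + 1), by omega⟩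
  rw [sum_Ico_eq_sum_range, ← sum_range_reflect, Nat.add_sub_cancel_left,
    show a + 1 + n + j - a = n + j + 1 by omega,
    ← sum_range_sub_mul_add_choose_of_le (by omega : j ≤ 2 * j) n]
  refine sum_congr rfl fun q hq => ?_
  have := mem_range.mp hq
  rw [show a + 1 + (n - 1 - q) - a = n - q by omega,
    show a + 1 + n + j - (a + 1 + (n - 1 - q)) - 1 = q + j by omega]

theorem sum_powersetCard_succ_insert {α M : Type*} [DecidableEq α] [AddCommMonoid M]
    {a : α} {s : Finset α} (h : a ∉ s) (j : ℕ) (f : Finset α → M) :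
    ∑ u ∈ powersetCard (j + 1) (insert a s), f u =
      ∑ u ∈ powersetCard (j + 1) s, f u + ∑ t ∈ powersetCard j s, f (insert a t) := by
  have hnot : ∀ t ∈ powersetCard j s, a ∉ t := fun t ht ha =>
    h ((mem_powersetCard.mp ht).1 ha)
  have hinj : Set.InjOn (insert a) (powersetCard j s : Set (Finset α)) := fun t ht t' ht' e => by
    rw [← erase_insert (hnot t ht), ← erase_insert (hnot t' ht'), e]
  rw [powersetCard_succ_insert h, sum_union, sum_image hinj]
  refine disjoint_left.mpr fun u hu hu' => ?_
  obtain ⟨t, -, rfl⟩ := mem_image.mp hu'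
  exact h ((mem_powersetCard.mp hu).1 (mem_insert_self a t))

theorem sum_filter_mem_powersetCard_succ_insert {α M : Type*} [DecidableEq α]
    [AddCommMonoid M] {a : α} {s : Finset α} (h : a ∉ s) (j : ℕ) (f : Finset α → M) :
    ∑ u ∈ (powersetCard (j + 1) (insert a s)).filter (a ∈ ·), f u =
      ∑ t ∈ powersetCard j s, f (insert a t) := by
  have hskip : ∀ u ∈ powersetCard (j + 1) s, (if a ∈ u then f u else 0) = 0 := fun u hu =>
    if_neg fun ha => h ((mem_powersetCard.mp hu).1 ha)
  rw [sum_filter, sum_powersetCard_succ_insert h, sum_eq_zero hskip, zero_add]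
  exact sum_congr rfl fun t _ => if_pos (mem_insert_self a t)

theorem sum_powersetCard_succ_Ico {M : Type*} [AddCommMonoid M] (f : Finset ℕ → M)
    (j b m : ℕ) :
    ∑ u ∈ (Ico b m).powersetCard (j + 1), f u =
      ∑ i ∈ Ico b m, ∑ t ∈ (Ico (i + 1) m).powersetCard j, f (insert i t) := by
  induction h : m - b generalizing b with
  | zero =>
    rw [Ico_eq_empty_of_le (Nat.sub_eq_zero_iff_le.mp h),
      powersetCard_eq_empty.mpr (by simp), sum_empty, sum_empty]
  | succ n ih =>
    have hb : b < m := by omega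
    rw [← insert_Ico_add_one_left_eq_Ico hb, sum_powersetCard_succ_insert (by simp),
      sum_insert (by simp), ih (b + 1) (by omega), add_comm]

def gapProd (l : List ℕ) : ℕ :=
  ∏ j ∈ range (l.length - 1), (l.getD (j + 1) 0 - l.getD j 0)

theorem gapProd_sort (s : Finset ℕ) :
    gapProd (s.sort (· ≤ ·)) =
      ∏ j ∈ range (s.card - 1),
        ((s.sort (· ≤ ·)).getD (j + 1) 0 - (s.sort (· ≤ ·)).getD j 0) := by
  rw [gapProd, length_sort]

theorem gapProd_cons_cons (a b : ℕ) (l : List ℕ) :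
    gapProd (a :: b :: l) = (b - a) * gapProd (b :: l) := by
  simp [gapProd, prod_range_succ', mul_comm]

def gapSum (a j m : ℕ) : ℕ :=
  ∑ t ∈ (Ico (a + 1) m).powersetCard j, gapProd ((insert a t).sort (· ≤ ·))

theorem gapSum_zero (a m : ℕ) : gapSum a 0 m = 1 := by
  simp [gapSum, gapProd]

theorem sort_insert_of_subset_Ico {i m : ℕ} {t : Finset ℕ} (ht : t ⊆ Ico (i + 1) m) :
    (insert i t).sort (· ≤ ·) = i :: t.sort (· ≤ ·) :=
  sort_insert _ (fun b hb => by have := mem_Ico.mp (ht hb); omega)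
    (fun hi => by have := mem_Ico.mp (ht hi); omega)

theorem gapSum_succ (a j m : ℕ) :
    gapSum a (j + 1) m = ∑ i ∈ Ico (a + 1) m, (i - a) * gapSum i j m := by
  rw [gapSum, sum_powersetCard_succ_Ico]
  refine sum_congr rfl fun i hi => ?_
  rw [gapSum, mul_sum]
  refine sum_congr rfl fun t ht => ?_
  have ht := (mem_powersetCard.mp ht).1
  have hit : insert i t ⊆ Ico (a + 1) m :=
    insert_subset hi (ht.trans (Ico_subset_Ico_left (by have := mem_Ico.mp hi; omega)))
  rw [sort_insert_of_subset_Ico hit, sort_insert_of_subset_Ico ht, gapProd_cons_cons]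

theorem gapSum_eq_choose (a j m : ℕ) : gapSum a j m = (m + j - a - 1).choose (2 * j) := by
  induction j generalizing a with
  | zero => rw [gapSum_zero, Nat.mul_zero, Nat.choose_zero_right]
  | succ j ih =>
    simp_rw [gapSum_succ, ih, sum_Ico_sub_mul_choose]
    congr 1; omega

/-- For `k ≥ 2`, `m ≥ 2`, the sum over all strictly increasing sequences
`1 = i₁ < i₂ < ⋯ < i_k < m` of `∏_{j=1}^{k-1} (i_{j+1} - i_j)` equals `C(m+k-3, 2k-2)`.
The sum ranges over `k`-element subsets of `{1, …, m-1}` containing `1`. -/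
theorem sum_prod_diff_left_closed (k m : ℕ) (hk : 2 ≤ k) (hm : 2 ≤ m) :
    ∑ s ∈ ((Finset.Ico 1 m).powersetCard k).filter (fun s => 1 ∈ s),
      ∏ j ∈ Finset.range (k - 1),
        ((s.sort (· ≤ ·)).getD (j + 1) 0 - (s.sort (· ≤ ·)).getD j 0) =
      Nat.choose (m + k - 3) (2 * k - 2) := by
  obtain ⟨j, rfl⟩ : ∃ j, k = j + 1 := ⟨k - 1, by omega⟩
  trans ∑ s ∈ ((Ico 1 m).powersetCard (j + 1)).filter (fun s => 1 ∈ s),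
    gapProd (s.sort (· ≤ ·))
  · exact sum_congr rfl fun s hs => by
      rw [gapProd_sort, (mem_powersetCard.mp (mem_filter.mp hs).1).2]
  rw [← insert_Ico_add_one_left_eq_Ico (by omega : 1 < m),
    sum_filter_mem_powersetCard_succ_insert (by simp), ← gapSum, gapSum_eq_choose,
    show m + (j + 1) - 3 = m + j - 1 - 1 by omega, show 2 * (j + 1) - 2 = 2 * j by omega]
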